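/- Let X = ℝ^s with the Euclidean norm, let Y be a metric space which is also a real vector space, let λ > 0, and let π : X → Y be a quotient map satisfying condition (★) with exponent λ such that every fiber π⁻¹(y) is contained in an affine line of ℝ^s. If φ, ψ : Y → X are intrinsically Lipschitz sections of π (with some constants L_φ, L_ψ ≥ 1), then there exists L' ≥ 1 such that φ + ψ is an intrinsically L'-Lipschitz section of the map (1/2)·π; that is, (1/2)·π(φ(y)+ψ(y)) = y for all y ∈ Y, and ‖(φ+ψ)(y₁) − (φ+ψ)(y₂)‖ ≤ L'·dist((φ+ψ)(y₁), {x ∈ ℝ^s : π(x) = 2y₂}) for all y₁, y₂ ∈ Y. -/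
import Mathlib


/-- Signed power: `α^[λ] := sign(α)·|α|^λ`. -/
noncomputable def spow (α lam : ℝ) : ℝ := Real.sign α * |α| ^ lam

lemma spow_one (α : ℝ) : spow α 1 = α := by
  rw [spow, Real.rpow_one]
  rcases lt_trichotomy α 0 with h | h | h
  · rw [Real.sign_of_neg h, abs_of_neg h]; ring
  · simp [h]
  · rw [Real.sign_of_pos h, abs_of_pos h]; ring

lemma spow_zero' (lam : ℝ) : spow 0 lam = 0 := by simp [spow]

/-- If `π : ℝ^s → Y` is a quotient map satisfying condition (★) with exponent `λ > 0`
whose fibers are contained in affine lines, and `φ, ψ` are intrinsically Lipschitz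
sections of `π`, then `φ + ψ` is an intrinsically Lipschitz section of `(1/2)·π`. -/
theorem statement_3 {s : ℕ} {Y : Type*} [MetricSpace Y] [AddCommGroup Y] [Module ℝ Y]
    (lam : ℝ) (hlam : 0 < lam)
    (π : EuclideanSpace ℝ (Fin s) → Y)
    (hcont : Continuous π) (hopen : IsOpenMap π) (hsurj : Function.Surjective π)
    (hstar : ∀ x₁ x₂ : EuclideanSpace ℝ (Fin s), ∀ α β : ℝ, (α, β) ≠ (0, 0) →
      π (α • x₁ + β • x₂) = spow α lam • π x₁ + spow β lam • π x₂)
    (hfib : ∀ y : Y, ∃ a v : EuclideanSpace ℝ (Fin s), v ≠ 0 ∧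
      π ⁻¹' {y} ⊆ {x | ∃ t : ℝ, x = a + t • v})
    (φ ψ : Y → EuclideanSpace ℝ (Fin s)) (Lφ Lψ : ℝ) (hLφ : 1 ≤ Lφ) (hLψ : 1 ≤ Lψ)
    (hφsec : ∀ y, π (φ y) = y) (hψsec : ∀ y, π (ψ y) = y)
    (hφlip : ∀ y₁ y₂ : Y, dist (φ y₁) (φ y₂) ≤ Lφ * Metric.infDist (φ y₁) (π ⁻¹' {y₂}))
    (hψlip : ∀ y₁ y₂ : Y, dist (ψ y₁) (ψ y₂) ≤ Lψ * Metric.infDist (ψ y₁) (π ⁻¹' {y₂})) :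
    ∃ L' : ℝ, 1 ≤ L' ∧
      (∀ y : Y, ((1 : ℝ) / 2) • π (φ y + ψ y) = y) ∧
      (∀ y₁ y₂ : Y, dist (φ y₁ + ψ y₁) (φ y₂ + ψ y₂) ≤
        L' * Metric.infDist (φ y₁ + ψ y₁) {x | π x = (2 : ℝ) • y₂}) := by
  by_cases hl : lam = 1
  · -- main case: π is linear
    subst hl
    have hadd : ∀ x₁ x₂ : EuclideanSpace ℝ (Fin s), π (x₁ + x₂) = π x₁ + π x₂ := by
      intro x₁ x₂
      have h := hstar x₁ x₂ 1 1 (by simp)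
      simpa [spow_one] using h
    have hzero : π 0 = 0 := by
      have h := hadd 0 0
      rw [add_zero] at h
      exact (left_eq_add.mp h)
    have hsmul : ∀ (α : ℝ) (x : EuclideanSpace ℝ (Fin s)), π (α • x) = α • π x := by
      intro α x
      have h := hstar x 0 α 1 (by simp)
      simpa [spow_one, hzero] using h
    have hsub : ∀ a b : EuclideanSpace ℝ (Fin s), π (a - b) = π a - π b := by
      intro a b
      have h1 : a - b = a + (-1 : ℝ) • b := by module
      rw [h1, hadd, hsmul]
      module
    refine ⟨(Lφ + Lψ) / 2, by linarith, ?_, ?_⟩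
    · intro y
      rw [hadd, hφsec, hψsec]
      module
    · intro y₁ y₂
      set p := φ y₁ + ψ y₁ with hp
      set S : Set (EuclideanSpace ℝ (Fin s)) := {x | π x = (2 : ℝ) • y₂} with hS
      have hqS : φ y₂ + ψ y₂ ∈ S := by
        show π (φ y₂ + ψ y₂) = (2 : ℝ) • y₂
        rw [hadd, hφsec, hψsec]; module
      have hSne : S.Nonempty := ⟨_, hqS⟩
      -- key: for any section value θy₁ of y₁ and any x ∈ S
      have key : ∀ θ : Y → EuclideanSpace ℝ (Fin s), (∀ y, π (θ y) = y) →
          ∀ x ∈ S, Metric.infDist (θ y₁) (π ⁻¹' {y₂}) ≤ 2⁻¹ * dist p x := by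
        intro θ hθ x hx
        have hxS : π x = (2 : ℝ) • y₂ := hx
        have hzmem : θ y₁ - (2⁻¹ : ℝ) • (p - x) ∈ π ⁻¹' {y₂} := by
          have : π (θ y₁ - (2⁻¹ : ℝ) • (p - x)) = y₂ := by
            rw [hsub, hsmul, hsub, hp, hadd, hφsec, hψsec, hθ, hxS]
            module
          simpa [Set.mem_preimage] using this
        calc Metric.infDist (θ y₁) (π ⁻¹' {y₂})
            ≤ dist (θ y₁) (θ y₁ - (2⁻¹ : ℝ) • (p - x)) :=
              Metric.infDist_le_dist_of_mem hzmem
          _ = 2⁻¹ * dist p x := by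
              rw [dist_eq_norm, sub_sub_cancel, norm_smul, dist_eq_norm]
              norm_num
      have hle : ∀ θ : Y → EuclideanSpace ℝ (Fin s), (∀ y, π (θ y) = y) →
          Metric.infDist (θ y₁) (π ⁻¹' {y₂}) ≤ 2⁻¹ * Metric.infDist p S := by
        intro θ hθ
        have hne : Nonempty S := hSne.to_subtype
        have h1 : (2 : ℝ) * Metric.infDist (θ y₁) (π ⁻¹' {y₂}) ≤ Metric.infDist p S := by
          by_contra hcon
          push_neg at hcon
          obtain ⟨x, hxS, hxd⟩ := (Metric.infDist_lt_iff hSne).mp hcon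
          have := key θ hθ x hxS
          linarith
        linarith
      have h1 := hφlip y₁ y₂
      have h2 := hψlip y₁ y₂
      have h3 := hle φ hφsec
      have h4 := hle ψ hψsec
      have tri : dist (φ y₁ + ψ y₁) (φ y₂ + ψ y₂) ≤
          dist (φ y₁) (φ y₂) + dist (ψ y₁) (ψ y₂) := dist_add_add_le _ _ _ _
      have hm1 := mul_le_mul_of_nonneg_left h3 (by linarith : (0:ℝ) ≤ Lφ)
      have hm2 := mul_le_mul_of_nonneg_left h4 (by linarith : (0:ℝ) ≤ Lψ)
      have : dist (φ y₁ + ψ y₁) (φ y₂ + ψ y₂) ≤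
          (Lφ + Lψ) / 2 * Metric.infDist p S := by nlinarith
      simpa [hp, hS] using this
  · -- degenerate case: π ≡ 0
    have hπ0 : ∀ x, π x = 0 := by
      intro x
      have h := hstar x x 2⁻¹ 2⁻¹ (by norm_num)
      have hx : (2⁻¹ : ℝ) • x + (2⁻¹ : ℝ) • x = x := by module
      rw [hx] at h
      have hs : spow 2⁻¹ lam = (2⁻¹ : ℝ) ^ lam := by
        rw [spow, Real.sign_of_pos (by norm_num : (0:ℝ) < 2⁻¹),
          abs_of_pos (by norm_num : (0:ℝ) < 2⁻¹), one_mul]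
      rw [hs] at h
      set c : ℝ := (2⁻¹ : ℝ) ^ lam with hc
      have hcne : c ≠ 2⁻¹ := by
        intro hceq
        apply hl
        have h2 : ((2⁻¹ : ℝ) ^ lam) = ((2⁻¹ : ℝ) ^ (1 : ℝ)) := by
          rw [Real.rpow_one, ← hc, hceq]
        exact (Real.strictAnti_rpow_of_base_lt_one (by norm_num) (by norm_num)).injective h2
      have hnz : (1 : ℝ) - (c + c) ≠ 0 := by
        intro h'
        apply hcne
        linarith
      have h0 : ((1 : ℝ) - (c + c)) • π x = 0 := by
        rw [sub_smul, add_smul, one_smul, ← h, sub_self]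
      have := congrArg (fun z => ((1 : ℝ) - (c + c))⁻¹ • z) h0
      simpa [inv_smul_smul₀ hnz] using this
    have hy0 : ∀ y : Y, y = 0 := by
      intro y
      obtain ⟨x, hx⟩ := hsurj y
      rw [← hx, hπ0]
    refine ⟨1, le_refl 1, ?_, ?_⟩
    · intro y
      rw [hπ0, smul_zero, hy0 y]
    · intro y₁ y₂
      have h12 : y₁ = y₂ := (hy0 y₁).trans (hy0 y₂).symm
      rw [h12, dist_self]
      have := Metric.infDist_nonneg (x := φ y₂ + ψ y₂)
        (s := {x | π x = (2 : ℝ) • y₂})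
      linarith
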